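/- arXiv:cs/0010036 — 4 statements merged into one kernel-verified Lean document; each statement's English description precedes it below -/
import Mathlib

section
/- Let O be a configuration and a, b two non-dual configurations reachable from O. Then the configuration c determined by the shot vector s(O,c) = (max(s_i(O,a), s_i(O,b)))_{i=1..p} is reachable from O (indeed from both a and b) by legal moves. -/
/-- One step of the Game of Cards: player `i` gives a card to player `i+1` (mod `p`). -/
def step (p : ℕ) [NeZero p] (a : Fin p → ℕ) (i : Fin p) : Fin p → ℕ :=
  Function.update (Function.update a i (a i - 1)) (i + 1) (a (i + 1) + 1)

/-- The move at position `i` is legal iff the right neighbour has strictly fewer cards. -/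
def legal (p : ℕ) [NeZero p] (a : Fin p → ℕ) (i : Fin p) : Prop := a (i + 1) < a i

/-- The move relation of the Game of Cards. -/
def Move (p : ℕ) [NeZero p] (a b : Fin p → ℕ) : Prop :=
  ∃ i : Fin p, legal p a i ∧ b = step p a i

/-- `playList p a L b` : playing the (legal) moves recorded in the list `L` of positions,
starting from `a`, ends in `b`. -/
def playList (p : ℕ) [NeZero p] : (Fin p → ℕ) → List (Fin p) → (Fin p → ℕ) → Prop
  | a, [], b => b = a
  | a, i :: L, b => legal p a i ∧ playList p (step p a i) L b

/-- `dvec p a b j` is the `j`-th prefix-sum difference `(a_0+⋯+a_j) - (b_0+⋯+b_j)`. -/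
def dvec (p : ℕ) (a b : Fin p → ℕ) (j : Fin p) : ℤ :=
  ∑ i ∈ Finset.univ.filter (· ≤ j), ((a i : ℤ) - (b i : ℤ))

/-- A configuration is dual iff `p ∤ n` and every entry is `k` or `k+1` where `k = n / p`. -/
def Dual (p n : ℕ) (a : Fin p → ℕ) : Prop :=
  ¬ p ∣ n ∧ ∀ i, a i = n / p ∨ a i = n / p + 1

/-- The last index of `Fin p` (the `p`-th player). -/
def lastIdx (p : ℕ) [NeZero p] : Fin p :=
  ⟨p - 1, Nat.sub_lt (Nat.pos_of_ne_zero (NeZero.ne p)) Nat.one_pos⟩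

/-- The list of configurations visited when playing the moves in `L` from `a`. -/
def trace (p : ℕ) [NeZero p] : (Fin p → ℕ) → List (Fin p) → List (Fin p → ℕ)
  | a, [] => [a]
  | a, i :: L => a :: trace p (step p a i) L

lemma step_at_succ (p : ℕ) [NeZero p] (a : Fin p → ℕ) (i : Fin p) :
    step p a i (i + 1) = a (i + 1) + 1 := by
  simp [step, Function.update_apply]

lemma step_at_self (p : ℕ) [NeZero p] (a : Fin p → ℕ) {i : Fin p} (h : i + 1 ≠ i) :
    step p a i i = a i - 1 := by
  simp [step, Function.update_apply, h.symm]

lemma step_at_other (p : ℕ) [NeZero p] (a : Fin p → ℕ) {i x : Fin p}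
    (h1 : x ≠ i + 1) (h2 : x ≠ i) : step p a i x = a x := by
  simp [step, Function.update_apply, h1, h2]

lemma legal_succ_ne {p : ℕ} [NeZero p] {a : Fin p → ℕ} {i : Fin p}
    (hi : legal p a i) : i + 1 ≠ i := by
  intro h; unfold legal at hi; rw [h] at hi; omega

lemma legal_step {p : ℕ} [NeZero p] {a : Fin p → ℕ} {i k : Fin p}
    (hi : legal p a i) (hk : legal p a k) (hne : k ≠ i) :
    legal p (step p a i) k := by
  have e1 : i + 1 ≠ i := legal_succ_ne hi
  have hne1 : k + 1 ≠ i + 1 := fun h => hne (add_right_cancel h)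
  unfold legal at *
  by_cases h1 : k + 1 = i
  · rw [h1, step_at_self p a e1]
    by_cases h2 : k = i + 1
    · rw [h2, step_at_succ]
      rw [h1] at hk; rw [h2] at hk; omega
    · rw [step_at_other p a h2 hne]
      rw [h1] at hk; omega
  · rw [step_at_other p a hne1 h1]
    by_cases h2 : k = i + 1
    · rw [h2, step_at_succ]
      rw [h2] at hk; omega
    · rw [step_at_other p a h2 hne]; exact hk

lemma step_comm {p : ℕ} [NeZero p] {a : Fin p → ℕ} {i k : Fin p}
    (hi : legal p a i) (hk : legal p a k) (hne : k ≠ i) :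
    step p (step p a i) k = step p (step p a k) i := by
  have e1 : i + 1 ≠ i := legal_succ_ne hi
  have e2 : k + 1 ≠ k := legal_succ_ne hk
  have hne1 : k + 1 ≠ i + 1 := fun h => hne (add_right_cancel h)
  have hne1' : i + 1 ≠ k + 1 := hne1.symm
  have hne' : i ≠ k := hne.symm
  have hia : a (i+1) < a i := hi
  have hka : a (k+1) < a k := hk
  set u := step p a i with hu
  set v := step p a k with hv
  funext x
  by_cases hx1 : x = k + 1
  · rw [hx1, step_at_succ]
    by_cases h1 : k + 1 = i
    · rw [h1, step_at_self p v e1, hu, step_at_self p a e1, hv, ← h1, step_at_succ]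
      rw [← h1] at hia
      omega
    · rw [step_at_other p v hne1 h1, hu, step_at_other p a hne1 h1,
          hv, step_at_succ]
  · by_cases hx2 : x = k
    · rw [hx2, step_at_self p u e2]
      by_cases h2 : k = i + 1
      · rw [h2, step_at_succ, hu, step_at_succ, ← h2, hv, step_at_self p a e2]
        omega
      · rw [hu, step_at_other p a h2 hne, step_at_other p v h2 hne,
            hv, step_at_self p a e2]
    · rw [step_at_other p u hx1 hx2]
      by_cases h3 : x = i + 1
      · rw [h3, hu, step_at_succ, step_at_succ, hv, ← h3,
            step_at_other p a hx1 hx2, h3]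
      · by_cases h4 : x = i
        · rw [h4, hu, step_at_self p a e1, step_at_self p v e1, hv, ← h4,
              step_at_other p a hx1 hx2, h4]
        · rw [hu, step_at_other p a h3 h4, step_at_other p v h3 h4, hv,
              step_at_other p a hx1 hx2]

lemma playList_append {p : ℕ} [NeZero p] {O a b : Fin p → ℕ} {C D : List (Fin p)}
    (h1 : playList p O C a) (h2 : playList p a D b) : playList p O (C ++ D) b := by
  induction C generalizing O with
  | nil => cases h1; exact h2
  | cons j C ih => exact ⟨h1.1, ih h1.2⟩

lemma playList_rtg {p : ℕ} [NeZero p] {a b : Fin p → ℕ} {L : List (Fin p)}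
    (h : playList p a L b) : Relation.ReflTransGen (Move p) a b := by
  induction L generalizing a with
  | nil => cases h; exact .refl
  | cons j L ih => exact .head ⟨j, h.1, rfl⟩ (ih h.2)

/-- Prepending a fresh legal move commutes past a play list. -/
lemma playList_step {p : ℕ} [NeZero p] {O a : Fin p → ℕ} {i : Fin p} {C : List (Fin p)}
    (hi : legal p O i) (hC : playList p O C a) (hnotin : i ∉ C) :
    legal p a i ∧ playList p (step p O i) C (step p a i) := by
  induction C generalizing O with
  | nil => cases hC; exact ⟨hi, rfl⟩
  | cons j C ih =>
    obtain ⟨hj, hC'⟩ := hC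
    have hij : i ≠ j := fun h => hnotin (h ▸ (List.mem_cons_self : j ∈ j :: C))
    have hi' : legal p (step p O j) i := legal_step hj hi hij
    obtain ⟨ha, hpl⟩ := ih hi' hC' (fun h => hnotin (List.mem_cons_of_mem j h))
    refine ⟨ha, legal_step hi hj hij.symm, ?_⟩
    rwa [step_comm hi hj hij.symm]

/-- A legal move occurring in a play list can be moved to the front. -/
lemma playList_extract {p : ℕ} [NeZero p] {j : Fin p} :
    ∀ {C₁ C₂ : List (Fin p)} {O a : Fin p → ℕ}, legal p O j → j ∉ C₁ →
      playList p O (C₁ ++ j :: C₂) a → playList p (step p O j) (C₁ ++ C₂) a := by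
  intro C₁
  induction C₁ with
  | nil => intro C₂ O a hj _ h; exact h.2
  | cons k C₁ ih =>
    intro C₂ O a hj hnotin h
    obtain ⟨hk, h'⟩ := h
    have hjk : j ≠ k := fun h => hnotin (h ▸ (List.mem_cons_self : k ∈ k :: C₁))
    refine ⟨legal_step hj hk hjk.symm, ?_⟩
    rw [step_comm hj hk hjk.symm]
    exact ih (legal_step hk hj hjk) (fun h => hnotin (List.mem_cons_of_mem k h)) h'

lemma exists_split {α : Type*} [DecidableEq α] {j : α} {C : List α} (h : j ∈ C) :
    ∃ C₁ C₂, C = C₁ ++ j :: C₂ ∧ j ∉ C₁ := by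
  induction C with
  | nil => cases h
  | cons k C ih =>
    by_cases hk : j = k
    · exact ⟨[], C, by rw [hk]; rfl, (List.not_mem_nil : j ∉ [])⟩
    · obtain ⟨C₁, C₂, rfl, hn⟩ := ih (by rcases List.mem_cons.1 h with h | h; exact absurd h hk; exact h)
      exact ⟨k :: C₁, C₂, rfl, by simp [hn, hk]⟩

lemma main_aux {p : ℕ} [NeZero p] :
    ∀ (D : List (Fin p)) (C : List (Fin p)) (O a b : Fin p → ℕ),
      playList p O C a → playList p O D b →
      ∃ E F c, playList p a E c ∧ playList p b F c ∧
        (∀ i, E.count i = D.count i - C.count i) ∧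
        (∀ i, F.count i = C.count i - D.count i) := by
  intro D
  induction D with
  | nil =>
    intro C O a b hC hD
    cases hD
    exact ⟨[], C, a, rfl, hC, fun i => by simp, fun i => by simp⟩
  | cons j D₂ ih =>
    intro C O a b hC hD
    obtain ⟨hj, hD₂⟩ := hD
    by_cases hjC : j ∈ C
    · obtain ⟨C₁, C₂, rfl, hn⟩ := exists_split hjC
      have hX : playList p (step p O j) (C₁ ++ C₂) a := playList_extract hj hn hC
      obtain ⟨E, F, c, hE, hF, hEc, hFc⟩ := ih (C₁ ++ C₂) (step p O j) a b hX hD₂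
      refine ⟨E, F, c, hE, hF, fun i => ?_, fun i => ?_⟩
      · have := hEc i
        simp only [List.count_append, List.count_cons] at *
        by_cases h : i = j <;> simp [h] at * <;> omega
      · have := hFc i
        simp only [List.count_append, List.count_cons] at *
        by_cases h : i = j <;> simp [h] at * <;> omega
    · obtain ⟨ha, hpl⟩ := playList_step hj hC hjC
      obtain ⟨E, F, c, hE, hF, hEc, hFc⟩ := ih C (step p O j) (step p a j) b hpl hD₂
      have hc0 : C.count j = 0 := List.count_eq_zero.2 hjC
      refine ⟨j :: E, F, c, ⟨ha, hE⟩, hF, fun i => ?_, fun i => ?_⟩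
      · have := hEc i
        simp only [List.count_cons] at *
        by_cases h : j = i
        · subst h; simp at *; omega
        · simp [h] at *; omega
      · have := hFc i
        simp only [List.count_cons] at *
        by_cases h : j = i
        · subst h; simp at *; omega
        · simp [h] at *; omega

/-- For non-dual `a`, `b` reachable from `O`, the configuration whose shot vector from `O`
is the componentwise max of `s(O,a)` and `s(O,b)` is reachable from `O`, and indeed
from both `a` and `b`. -/
theorem stmt12 (p n : ℕ) [NeZero p] (O a b : Fin p → ℕ)
    (hO : ∑ i, O i = n) (hna : ¬ Dual p n a) (hnb : ¬ Dual p n b)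
    (C D : List (Fin p)) (hC : playList p O C a) (hD : playList p O D b) :
    ∃ (c : Fin p → ℕ) (E : List (Fin p)),
      playList p O E c ∧ (∀ i, E.count i = max (C.count i) (D.count i)) ∧
      Relation.ReflTransGen (Move p) a c ∧ Relation.ReflTransGen (Move p) b c := by
  obtain ⟨E, F, c, hE, hF, hEc, hFc⟩ := main_aux D C O a b hC hD
  refine ⟨c, C ++ E, playList_append hC hE, fun i => ?_, playList_rtg hE, playList_rtg hF⟩
  rw [List.count_append, hEc i]
  omega
end

section
/- If q = 0 and O ≠ P = (k,...,k), then there exists a player i that never moves in any play of the game: every maximal sequence of legal moves from O reaches P, and s_i(O,P) = 0 for i achieving the minimum of d_j(O,P) = (O_1+...+O_j) - jk over j. -/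
section
variable (p k : ℕ) [NeZero p]

lemma le_lastIdx (j : Fin p) : j ≤ lastIdx p := by
  have := j.isLt
  simp [Fin.le_def, lastIdx]; omega

lemma eq_lastIdx_iff (j : Fin p) : j = lastIdx p ↔ j.val = p - 1 := by
  constructor
  · rintro rfl; rfl
  · intro h; exact Fin.ext h

lemma succ_val {j : Fin p} (hj : j ≠ lastIdx p) : ((j + 1 : Fin p)).val = j.val + 1 := by
  have h1 := j.isLt
  have h2 : j.val ≠ p - 1 := fun h => hj (Fin.ext h)
  have : ((j + 1 : Fin p)).val = (j.val + 1) % p := by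
    simp [Fin.add_def]
  rw [this, Nat.mod_eq_of_lt]; omega

lemma last_succ_val : ((lastIdx p + 1 : Fin p)).val = 0 := by
  have h1 : 0 < p := Nat.pos_of_ne_zero (NeZero.ne p)
  have : ((lastIdx p + 1 : Fin p)).val = ((p - 1) + 1) % p := by
    simp [Fin.add_def, lastIdx]
  rw [this]
  have : p - 1 + 1 = p := by omega
  simp [this]

lemma dstep (a : Fin p → ℕ) (j : Fin p) (hleg : legal p a j) (m : Fin p) :
    dvec p (step p a j) (fun _ => k) m
      = dvec p a (fun _ => k) m - (if j = m then 1 else 0)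
        + (if j = lastIdx p then 1 else 0) := by
  have hne : (j + 1 : Fin p) ≠ j := by
    intro hh
    rw [legal, hh] at hleg
    exact lt_irrefl _ hleg
  have haj : 1 ≤ a j := Nat.one_le_iff_ne_zero.mpr (fun h0 => by
    simp [legal, h0] at hleg)
  have hstep : ∀ x, ((step p a j x : ℤ))
      = (a x : ℤ) + (if x = j + 1 then 1 else 0) - (if x = j then 1 else 0) := by
    intro x
    by_cases hx1 : x = j + 1
    · subst hx1
      simp [step, Function.update_apply, hne]
    · by_cases hx2 : x = j
      · subst hx2
        simp [step, Function.update_apply, hx1, Ne.symm hne]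
        omega
      · simp [step, Function.update_apply, hx1, hx2]
  have key : dvec p (step p a j) (fun _ => k) m
      = dvec p a (fun _ => k) m + (if (j+1 : Fin p) ≤ m then 1 else 0)
        - (if j ≤ m then 1 else 0) := by
    unfold dvec
    calc ∑ i ∈ Finset.univ.filter (· ≤ m), ((step p a j i : ℤ) - ((fun _ => (k:ℕ)) i : ℕ))
        = ∑ i ∈ Finset.univ.filter (· ≤ m),
            ((((a i : ℤ) - k) + (if i = j + 1 then 1 else 0)) - (if i = j then 1 else 0)) := by
          refine Finset.sum_congr rfl fun x _ => ?_
          rw [hstep x]; push_cast; ring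
      _ = _ := by
          rw [Finset.sum_sub_distrib, Finset.sum_add_distrib,
            Finset.sum_ite_eq' (Finset.univ.filter (· ≤ m)) (j+1) (fun _ => (1:ℤ)),
            Finset.sum_ite_eq' (Finset.univ.filter (· ≤ m)) j (fun _ => (1:ℤ))]
          simp
  rw [key]
  by_cases hj : j = lastIdx p
  · subst hj
    have h1 : ((lastIdx p + 1 : Fin p)) ≤ m := by
      rw [Fin.le_def, last_succ_val]; omega
    have h2 : (lastIdx p ≤ m) ↔ (lastIdx p = m) := by
      constructor
      · intro hh; exact le_antisymm hh (le_lastIdx p m) |>.symm ▸ rfl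
      · rintro rfl; exact le_refl _
    simp only [h1, if_true, if_pos rfl]
    by_cases hm : lastIdx p = m
    · simp [hm, h2.mpr hm]
    · have : ¬ lastIdx p ≤ m := fun hh => hm (h2.mp hh)
      simp [hm, this]
  · have hs := succ_val p hj
    have hlt : (j + 1 : Fin p) ≤ m ↔ j.val + 1 ≤ m.val := by rw [Fin.le_def, hs]
    have hle : j ≤ m ↔ j.val ≤ m.val := Fin.le_def
    simp only [if_neg hj, add_zero]
    by_cases hm : j = m
    · subst hm
      simp [hlt, hle]
    · have hvm : j.val ≠ m.val := fun hh => hm (Fin.ext hh)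
      by_cases hc : j.val ≤ m.val
      · have : j.val + 1 ≤ m.val := by omega
        simp [hlt.mpr this, hle.mpr hc, hm]
      · have h3 : ¬ (j+1:Fin p) ≤ m := by rw [hlt]; omega
        have h4 : ¬ j ≤ m := by rw [hle]; omega
        simp [h3, h4, hm]
/-- minimum of the prefix-sum differences -/
noncomputable def mu (a : Fin p → ℕ) : ℤ :=
  Finset.univ.inf' ⟨lastIdx p, Finset.mem_univ _⟩ (dvec p a (fun _ => k))

lemma dsucc (a : Fin p → ℕ) (hlast : dvec p a (fun _ => k) (lastIdx p) = 0) (j : Fin p) :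
    dvec p a (fun _ => k) (j + 1) = dvec p a (fun _ => k) j + ((a (j+1) : ℤ) - k) := by
  by_cases hj : j = lastIdx p
  · subst hj
    rw [hlast]
    have h0 : (lastIdx p + 1 : Fin p) = 0 := Fin.ext (last_succ_val p)
    rw [h0]
    unfold dvec
    have : Finset.univ.filter (· ≤ (0 : Fin p)) = {0} := by
      ext x
      simp [Fin.le_zero_iff]
    rw [this]
    simp
  · have hs := succ_val p hj
    unfold dvec
    have hins : Finset.univ.filter (· ≤ (j+1 : Fin p)) = insert (j+1) (Finset.univ.filter (· ≤ j)) := by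
      ext x
      simp only [Finset.mem_filter, Finset.mem_univ, true_and, Finset.mem_insert]
      rw [Fin.le_def, Fin.le_def, hs]
      constructor
      · intro hh
        rcases Nat.lt_or_ge x.val (j.val + 1) with h1 | h1
        · right; omega
        · left; exact Fin.ext (by omega)
      · rintro (rfl | hh)
        · rw [hs]
        · omega
    have hnm : (j+1 : Fin p) ∉ Finset.univ.filter (· ≤ j) := by
      simp only [Finset.mem_filter, Finset.mem_univ, true_and]
      rw [Fin.le_def, hs]; omega
    rw [hins, Finset.sum_insert hnm]
    ring

lemma legal_bound (a : Fin p → ℕ) (hlast : dvec p a (fun _ => k) (lastIdx p) = 0)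
    (j : Fin p) (hleg : legal p a j) :
    dvec p a (fun _ => k) (j+1) + dvec p a (fun _ => k) (j-1) + 1
      ≤ 2 * dvec p a (fun _ => k) j := by
  have e1 := dsucc p k a hlast j
  have e2 := dsucc p k a hlast (j - 1)
  rw [sub_add_cancel] at e2
  have : (a (j+1) : ℤ) + 1 ≤ (a j : ℤ) := by exact_mod_cast hleg
  omega

lemma mu_le_zero (a : Fin p → ℕ) (hlast : dvec p a (fun _ => k) (lastIdx p) = 0) :
    mu p k a ≤ 0 := by
  rw [← hlast]
  exact Finset.inf'_le _ (Finset.mem_univ _)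

lemma mu_le (a : Fin p → ℕ) (m : Fin p) : mu p k a ≤ dvec p a (fun _ => k) m :=
  Finset.inf'_le _ (Finset.mem_univ _)

lemma legal_gt_mu (a : Fin p → ℕ) (hlast : dvec p a (fun _ => k) (lastIdx p) = 0)
    (j : Fin p) (hleg : legal p a j) :
    mu p k a + 1 ≤ dvec p a (fun _ => k) j := by
  have h1 := legal_bound p k a hlast j hleg
  have h2 := mu_le p k a (j+1)
  have h3 := mu_le p k a (j-1)
  omega

lemma mu_step (a : Fin p → ℕ) (hlast : dvec p a (fun _ => k) (lastIdx p) = 0)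
    (j : Fin p) (hleg : legal p a j) :
    mu p k (step p a j) = mu p k a + (if j = lastIdx p then 1 else 0) := by
  have hd := dstep p k a j hleg
  have hgt := legal_gt_mu p k a hlast j hleg
  apply le_antisymm
  · obtain ⟨m0, _, hm0⟩ := Finset.exists_mem_eq_inf' (⟨lastIdx p, Finset.mem_univ _⟩ :
      (Finset.univ : Finset (Fin p)).Nonempty) (dvec p a (fun _ => k))
    by_cases hj : j = lastIdx p
    · subst hj
      have hmu1 : mu p k a ≤ -1 := by
        have := legal_bound p k a hlast (lastIdx p) hleg
        rw [hlast] at this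
        have h2 := mu_le p k a (lastIdx p + 1)
        have h3 := mu_le p k a (lastIdx p - 1)
        omega
      have hm0ne : m0 ≠ lastIdx p := by
        intro hh
        rw [hh, hlast] at hm0
        change mu p k a = 0 at hm0
        omega
      have : dvec p (step p a (lastIdx p)) (fun _ => k) m0 = mu p k a + 1 := by
        rw [hd m0, if_neg (fun hh => hm0ne hh.symm), if_pos rfl, ← hm0]
        unfold mu; ring
      calc mu p k (step p a (lastIdx p)) ≤ _ := mu_le p k _ m0
        _ = _ := by rw [this]; simp
    · have hm0ne : m0 ≠ j := by
        intro hh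
        rw [hh] at hm0
        change mu p k a = _ at hm0
        omega
      have : dvec p (step p a j) (fun _ => k) m0 = mu p k a := by
        rw [hd m0, if_neg (fun hh => hm0ne hh.symm), if_neg hj, ← hm0]
        unfold mu; ring
      calc mu p k (step p a j) ≤ _ := mu_le p k _ m0
        _ = _ := by rw [this]; simp [hj]
  · apply Finset.le_inf'
    intro m _
    rw [hd m]
    by_cases hj : j = lastIdx p
    · subst hj
      have hmu1 : mu p k a ≤ -1 := by
        have := legal_bound p k a hlast (lastIdx p) hleg
        rw [hlast] at this
        have h2 := mu_le p k a (lastIdx p + 1)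
        have h3 := mu_le p k a (lastIdx p - 1)
        omega
      have hm := mu_le p k a m
      by_cases hjm : lastIdx p = m
      · subst hjm
        rw [hlast]
        simp; omega
      · simp [hjm]; omega
    · have hm := mu_le p k a m
      by_cases hjm : j = m
      · subst hjm
        simp [hj]; omega
      · simp [hjm, hj]; omega
lemma play_d (L : List (Fin p)) : ∀ (a c : Fin p → ℕ), playList p a L c →
    dvec p a (fun _ => k) (lastIdx p) = 0 →
    dvec p c (fun _ => k) (lastIdx p) = 0 ∧
    mu p k c = mu p k a + (L.count (lastIdx p) : ℤ) ∧
    ∀ m, dvec p c (fun _ => k) m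
        = dvec p a (fun _ => k) m - (L.count m : ℤ) + (L.count (lastIdx p) : ℤ) := by
  induction L with
  | nil =>
    intro a c hp hlast
    rw [show c = a from hp]
    refine ⟨hlast, by simp, fun m => by simp⟩
  | cons j L' ih =>
    intro a c hp hlast
    obtain ⟨hleg, hplay⟩ := hp
    have hd := dstep p k a j hleg
    have hblast : dvec p (step p a j) (fun _ => k) (lastIdx p) = 0 := by
      rw [hd (lastIdx p)]
      by_cases hj : j = lastIdx p <;> simp [hj, hlast]
    obtain ⟨h1, h2, h3⟩ := ih (step p a j) c hplay hblast
    have hmu := mu_step p k a hlast j hleg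
    have hcount : ∀ x : Fin p, (((j :: L').count x : ℤ))
        = (L'.count x : ℤ) + (if j = x then 1 else 0) := by
      intro x
      rw [List.count_cons]
      by_cases hx : x = j
      · simp [hx]
      · have h1 : ¬ (j = x) := fun hh => hx hh.symm
        simp [hx, h1]
    refine ⟨h1, ?_, ?_⟩
    · rw [h2, hmu, hcount (lastIdx p)]
      ring
    · intro m
      rw [h3 m, hd m, hcount m, hcount (lastIdx p)]
      ring

lemma const_of_max (c : Fin p → ℕ) (hmax : ∀ j, ¬ legal p c j) (x : Fin p) : c x = c 0 := by
  have hp : 0 < p := Nat.pos_of_ne_zero (NeZero.ne p)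
  have hstep : ∀ j : Fin p, c j ≤ c (j + 1) := fun j => le_of_not_gt (hmax j)
  have key : ∀ (n : ℕ) (y : Fin p) (hn : y.val + n ≤ p - 1),
      c y ≤ c ⟨y.val + n, lt_of_le_of_lt hn (Nat.sub_lt hp Nat.one_pos)⟩ := by
    intro n
    induction n with
    | zero =>
      intro y hn
      exact le_of_eq (congrArg c (Fin.ext (by simp))).symm
    | succ n ihn =>
      intro y hn
      have h1 : y.val + n ≤ p - 1 := by omega
      set z : Fin p := ⟨y.val + n, lt_of_le_of_lt h1 (Nat.sub_lt hp Nat.one_pos)⟩ with hzdef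
      have hz : z ≠ lastIdx p := by
        intro hh
        have : z.val = p - 1 := by rw [hh]; rfl
        simp [hzdef] at this
        omega
      have hz1 : (z + 1 : Fin p) = ⟨y.val + (n+1), lt_of_le_of_lt hn (Nat.sub_lt hp Nat.one_pos)⟩ := by
        apply Fin.ext
        rw [succ_val p hz]
        rfl
      calc c y ≤ c z := ihn y h1
        _ ≤ c (z + 1) := hstep z
        _ = _ := by rw [hz1]
  have h0x : c 0 ≤ c x := by
    have h := key x.val 0 (by
      have := x.isLt
      simp only [Fin.val_zero]
      omega)
    convert h using 2
    exact Fin.ext (by simp [Fin.val_zero])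
  have hxl : c x ≤ c (lastIdx p) := by
    have hle : x.val ≤ p - 1 := by have := x.isLt; omega
    have h := key (p - 1 - x.val) x (by omega)
    convert h using 2
    apply Fin.ext
    show p - 1 = x.val + (p - 1 - x.val)
    omega
  have hl0 : c (lastIdx p) ≤ c 0 := by
    have h := hstep (lastIdx p)
    rwa [show (lastIdx p + 1 : Fin p) = 0 from Fin.ext (last_succ_val p)] at h
  omega
end

/-- If `q = 0` and `O ≠ (k,…,k)`, every maximal play from `O` ends at `P = (k,…,k)`,
and a player `i` minimizing `d_i(O,P)` never moves. -/
theorem stmt14 (p k : ℕ) [NeZero p] (O : Fin p → ℕ) (h : ∑ i, O i = k * p)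
    (hO : O ≠ fun _ => k) (i : Fin p)
    (hi : ∀ j, dvec p O (fun _ => k) i ≤ dvec p O (fun _ => k) j)
    (L : List (Fin p)) (c : Fin p → ℕ) (hL : playList p O L c)
    (hmax : ∀ j, ¬ legal p c j) :
    c = (fun _ => k) ∧ L.count i = 0 := by
  have hp : 0 < p := Nat.pos_of_ne_zero (NeZero.ne p)
  have hfilter : (Finset.univ.filter (· ≤ lastIdx p)) = (Finset.univ : Finset (Fin p)) := by
    ext x; simp [le_lastIdx]
  have hOlast : dvec p O (fun _ => k) (lastIdx p) = 0 := by
    unfold dvec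
    rw [hfilter, Finset.sum_sub_distrib]
    have h1 : (∑ x : Fin p, (O x : ℤ)) = ((k * p : ℕ) : ℤ) := by
      rw [← Nat.cast_sum, h]
    rw [h1]
    simp [Finset.card_univ]
    push_cast
    ring
  obtain ⟨hclast, hmu, hdm⟩ := play_d p k L O c hL hOlast
  have hconst := const_of_max p c hmax
  have hsum : (∑ x : Fin p, ((c x : ℤ) - k)) = 0 := by
    have h2 := hclast
    unfold dvec at h2
    rwa [hfilter] at h2
  have hpc : (p : ℤ) * ((c 0 : ℤ) - k) = 0 := by
    rw [← hsum, Finset.sum_congr rfl (fun x _ => by rw [hconst x])]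
    simp [Finset.card_univ]
    ring
  have hc0 : (c 0 : ℤ) = k := by
    have hp' : (p : ℤ) ≠ 0 := by exact_mod_cast hp.ne'
    rcases mul_eq_zero.mp hpc with h' | h'
    · exact absurd h' hp'
    · linarith
  have hcP : c = (fun _ => k) := by
    funext x
    rw [hconst x]
    exact_mod_cast hc0
  refine ⟨hcP, ?_⟩
  have hdc : ∀ m, dvec p c (fun _ => k) m = 0 := by
    intro m
    unfold dvec
    apply Finset.sum_eq_zero
    intro x _
    rw [hcP]
    simp
  have hmuc : mu p k c = 0 := by
    apply le_antisymm
    · rw [← hdc (lastIdx p)]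
      exact mu_le p k c (lastIdx p)
    · apply Finset.le_inf'
      intro m _
      rw [hdc m]
  have hmuO : mu p k O = dvec p O (fun _ => k) i :=
    le_antisymm (mu_le p k O i) (Finset.le_inf' _ _ (fun m _ => hi m))
  rw [hmuc, hmuO] at hmu
  by_cases hil : i = lastIdx p
  · have h0 : dvec p O (fun _ => k) i = 0 := hil ▸ hOlast
    rw [h0] at hmu
    have : (L.count (lastIdx p) : ℤ) = 0 := by omega
    rw [hil]
    exact_mod_cast this
  · have h1 := hdm i
    rw [hdc i] at h1
    have : (L.count i : ℤ) = 0 := by omega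
    exact_mod_cast this
end

section
/- On the set of dual configurations (0 < q < p), the longest chain in the dominance order — a ≥ b iff all prefix sums of a dominate those of b — has length q(p − q), with greatest element (k+1,...,k+1,k,...,k) (q entries k+1 first). -/
namespace Aux17
open Finset

/-- Sum of q distinct naturals is at least 0+1+...+(q-1). -/
lemma sum_range_card_le : ∀ (n : ℕ) (S : Finset ℕ), S.card = n →
    ∑ x ∈ range n, x ≤ ∑ x ∈ S, x := by
  intro n
  induction n with
  | zero => intro S _; simp
  | succ n IH =>
    intro S hS
    have hne : S.Nonempty := card_pos.mp (by omega)
    set M := S.max' hne with hMdef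
    have hMmem : M ∈ S := S.max'_mem hne
    have hM : n ≤ M := by
      have hsub : S ⊆ range (M + 1) := fun x hx =>
        mem_range.mpr (Nat.lt_succ_of_le (S.le_max' x hx))
      have := card_le_card hsub
      rw [hS, card_range] at this; omega
    have hcard : (S.erase M).card = n := by
      rw [card_erase_of_mem hMmem, hS]; omega
    have h1 : ∑ x ∈ range n, x ≤ ∑ x ∈ S.erase M, x := IH _ hcard
    have h2 : ∑ x ∈ S, x = M + ∑ x ∈ S.erase M, x := by
      rw [← Finset.add_sum_erase _ _ hMmem]
    rw [Finset.sum_range_succ, h2]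
    omega

/-- Bounds for the sum of a q-subset of `range p`. -/
lemma subset_sum_bounds (p q : ℕ) (S : Finset ℕ) (hS : S ⊆ range p) (hcard : S.card = q) :
    (∑ x ∈ range q, x ≤ ∑ x ∈ S, x) ∧
    (∑ x ∈ S, x + ∑ x ∈ range (p - q), x ≤ ∑ x ∈ range p, x) := by
  constructor
  · exact hcard ▸ sum_range_card_le S.card S rfl
  · have h1 : ∑ x ∈ range p \ S, x + ∑ x ∈ S, x = ∑ x ∈ range p, x := sum_sdiff hS
    have h2 : (range p \ S).card = p - q := by
      rw [card_sdiff_of_subset hS, card_range, hcard]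
    have h3 : ∑ x ∈ range (p - q), x ≤ ∑ x ∈ range p \ S, x :=
      h2 ▸ sum_range_card_le _ _ rfl
    omega

lemma range_sum_identity (p q : ℕ) (hqp : q < p) :
    ∑ x ∈ range p, x = ∑ x ∈ range (p - q), x + (q * (p - q) + ∑ x ∈ range q, x) := by
  have h1 : ∑ i ∈ Ico 0 (p - q), (i : ℕ) + ∑ i ∈ Ico (p - q) p, i = ∑ i ∈ Ico 0 p, i :=
    sum_Ico_consecutive _ (by omega) (by omega)
  have h2 : ∑ i ∈ Ico (p - q) p, (i : ℕ) = ∑ i ∈ range (p - (p - q)), ((p - q) + i) :=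
    sum_Ico_eq_sum_range _ _ _
  have h3 : p - (p - q) = q := by omega
  rw [h3] at h2
  have h4 : ∑ i ∈ range q, ((p - q) + i) = q * (p - q) + ∑ i ∈ range q, i := by
    rw [Finset.sum_add_distrib, Finset.sum_const, card_range, smul_eq_mul]
  simp only [← Finset.range_eq_Ico] at h1
  omega

/-- Counting a filtered image of an injective enumeration. -/
lemma card_helper (p q : ℕ) (f : ℕ → ℕ) (hlt : ∀ j, j < q → f j < p)
    (hinj : ∀ j, j < q → ∀ j', j' < q → f j = f j' → j = j')
    (P : ℕ → Prop) [DecidablePred P] :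
    (univ.filter (fun i : Fin p => (∃ j ∈ Finset.range q, f j = (i : ℕ)) ∧ P (i : ℕ))).card
      = ((Finset.range q).filter (fun j => P (f j))).card := by
  symm
  apply Finset.card_bij (fun j hj => (⟨f j, hlt j (mem_range.mp (mem_filter.mp hj).1)⟩ : Fin p))
  · intro j hj
    obtain ⟨hj1, hj2⟩ := mem_filter.mp hj
    exact mem_filter.mpr ⟨mem_univ _, ⟨j, hj1, rfl⟩, hj2⟩
  · intro j1 h1 j2 h2 heq
    have := Fin.mk.injEq _ _ _ _ ▸ heq
    exact hinj j1 (mem_range.mp (mem_filter.mp h1).1) j2 (mem_range.mp (mem_filter.mp h2).1)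
      (by simpa using heq)
  · intro b hb
    obtain ⟨_, ⟨j, hj1, hj2⟩, hP⟩ := mem_filter.mp hb
    refine ⟨j, mem_filter.mpr ⟨hj1, by rw [hj2]; exact hP⟩, ?_⟩
    exact Fin.ext hj2

/-- dvec between two `k + indicator` configurations. -/
lemma dvec_eq (p kx : ℕ) (x y : Fin p → ℕ) (Ex Ey : Fin p → Prop)
    [DecidablePred Ex] [DecidablePred Ey]
    (hx : ∀ i, x i = kx + if Ex i then 1 else 0)
    (hy : ∀ i, y i = kx + if Ey i then 1 else 0) (j : Fin p) :
    dvec p x y j = ((univ.filter (fun i => i ≤ j ∧ Ex i)).card : ℤ)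
      - ((univ.filter (fun i => i ≤ j ∧ Ey i)).card : ℤ) := by
  unfold dvec
  have : ∀ i ∈ univ.filter (· ≤ j), ((x i : ℤ) - y i)
      = (if Ex i then (1:ℤ) else 0) - (if Ey i then (1:ℤ) else 0) := by
    intro i _
    rw [hx i, hy i]
    push_cast
    ring
  rw [Finset.sum_congr rfl this, Finset.sum_sub_distrib, Finset.sum_boole, Finset.sum_boole,
    Finset.filter_filter, Finset.filter_filter]

lemma sum_config (p kx : ℕ) (x : Fin p → ℕ) (Ex : Fin p → Prop) [DecidablePred Ex]
    (hx : ∀ i, x i = kx + if Ex i then 1 else 0) :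
    ∑ i, x i = p * kx + (univ.filter Ex).card := by
  calc ∑ i, x i = ∑ i : Fin p, (kx + if Ex i then 1 else 0) := Finset.sum_congr rfl (fun i _ => hx i)
    _ = ∑ _i : Fin p, kx + ∑ i : Fin p, (if Ex i then 1 else 0) := Finset.sum_add_distrib
    _ = p * kx + (univ.filter Ex).card := by
        rw [Finset.sum_const, card_univ, Fintype.card_fin, smul_eq_mul, ← Finset.card_filter]

lemma indicator_form (k : ℕ) {p : ℕ} (a : Fin p → ℕ) (h1 : ∀ i, a i = k ∨ a i = k + 1) :
    ∀ i, a i = k + if a i = k + 1 then 1 else 0 := by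
  intro i
  rcases h1 i with h | h <;> rw [h] <;> split <;> omega

lemma card_extra (p k q : ℕ) (a : Fin p → ℕ) (h1 : ∀ i, a i = k ∨ a i = k + 1)
    (h2 : ∑ i, a i = k * p + q) :
    (univ.filter (fun i => a i = k + 1)).card = q := by
  have := sum_config p k a _ (indicator_form k a h1)
  rw [Nat.mul_comm] at this
  omega



/-- natural-number potential -/
def phi (p : ℕ) (x : Fin p → ℕ) : ℕ := ∑ i : Fin p, x i * (p - (i : ℕ))

lemma sum_dvec (p : ℕ) (x y : Fin p → ℕ) :
    ∑ j : Fin p, dvec p x y j = (phi p x : ℤ) - (phi p y : ℤ) := by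
  unfold dvec phi
  have hcomm : (∑ j : Fin p, ∑ i ∈ univ.filter (fun i => i ≤ j), ((x i : ℤ) - y i))
      = ∑ i : Fin p, ∑ j ∈ univ.filter (fun j => i ≤ j), ((x i : ℤ) - y i) :=
    Finset.sum_comm' (by intro j i; simp)
  rw [hcomm]
  have h1 : ∀ i : Fin p, ∑ _j ∈ univ.filter (fun j => i ≤ j), ((x i : ℤ) - y i)
      = ((p - (i : ℕ) : ℕ) : ℤ) * ((x i : ℤ) - y i) := by
    intro i
    rw [Finset.sum_const, nsmul_eq_mul]
    congr 1
    have : univ.filter (fun j => i ≤ j) = Finset.Ici i := by ext z; simp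
    rw [this, Fin.card_Ici]
  rw [Finset.sum_congr rfl (fun i _ => h1 i)]
  push_cast
  rw [← Finset.sum_sub_distrib]
  apply Finset.sum_congr rfl
  intro i _
  ring

lemma eq_of_dvec_zero (p : ℕ) (x y : Fin p → ℕ) (h : ∀ j, dvec p x y j = 0) : x = y := by
  have key : ∀ m : ℕ, ∀ i : Fin p, (i : ℕ) = m → (x i : ℤ) = y i := by
    intro m
    induction m using Nat.strong_induction_on with
    | _ m IH =>
      intro i him
      have h1 := h i
      unfold dvec at h1
      have h2 : univ.filter (· ≤ i) = insert i (univ.filter (· < i)) := by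
        ext z
        simp only [mem_filter, mem_univ, true_and, mem_insert]
        constructor
        · intro hz; rcases eq_or_lt_of_le hz with h' | h'
          · exact Or.inl h'
          · exact Or.inr h'
        · rintro (rfl | hz); · exact le_refl _
          · exact le_of_lt hz
      rw [h2, Finset.sum_insert (by simp)] at h1
      have h3 : ∑ i' ∈ univ.filter (· < i), ((x i' : ℤ) - y i') = 0 := by
        apply Finset.sum_eq_zero
        intro i' hi'
        have hlt : (i' : ℕ) < m := him ▸ (mem_filter.mp hi').2
        have := IH _ hlt i' rfl
        omega
      rw [h3] at h1
      omega
  funext i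
  exact_mod_cast key (i : ℕ) i rfl

lemma phi_lt (p : ℕ) (x y : Fin p → ℕ) (h0 : ∀ j, 0 ≤ dvec p x y j) (hne : x ≠ y) :
    (phi p y : ℤ) < phi p x := by
  have hs : 0 ≤ ∑ j : Fin p, dvec p x y j := Finset.sum_nonneg (fun j _ => h0 j)
  rcases eq_or_lt_of_le hs with h | h
  · exfalso
    apply hne
    apply eq_of_dvec_zero
    intro j
    have := (Finset.sum_eq_zero_iff_of_nonneg (fun j _ => h0 j)).mp h.symm
    exact this j (mem_univ _)
  · have := sum_dvec p x y
    omega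

/-- phi of a dual configuration split into base + extras. -/
lemma phi_split (p k : ℕ) (a : Fin p → ℕ) (h1 : ∀ i, a i = k ∨ a i = k + 1) :
    phi p a = k * (∑ i : Fin p, (p - (i : ℕ)))
      + ∑ i ∈ univ.filter (fun i => a i = k + 1), (p - (i : ℕ)) := by
  unfold phi
  have : ∀ i : Fin p, a i * (p - (i : ℕ))
      = k * (p - (i : ℕ)) + (if a i = k + 1 then (p - (i : ℕ)) else 0) := by
    intro i
    by_cases hE : a i = k + 1
    · rw [if_pos hE, hE]; ring
    · rw [if_neg hE]
      rcases h1 i with h | h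
      · rw [h]; ring
      · exact absurd h hE
  rw [Finset.sum_congr rfl (fun i _ => this i), Finset.sum_add_distrib, ← Finset.mul_sum,
    ← Finset.sum_filter]

lemma extras_sum_bounds (p q : ℕ) (hp : 0 < p) (E : Finset (Fin p)) (hcard : E.card = q) :
    (∑ x ∈ range q, x + q ≤ ∑ i ∈ E, (p - (i : ℕ))) ∧
    (∑ i ∈ E, (p - (i : ℕ)) + ∑ x ∈ range (p - q), x ≤ ∑ x ∈ range p, x + q) := by
  set S : Finset ℕ := E.image (fun i : Fin p => p - 1 - (i : ℕ)) with hSdef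
  have hinj : Set.InjOn (fun i : Fin p => p - 1 - (i : ℕ)) E := by
    intro i _ j _ hij
    have hij' : p - 1 - (i : ℕ) = p - 1 - (j : ℕ) := hij
    have hi := i.isLt; have hj := j.isLt
    exact Fin.ext (by omega)
  have hScard : S.card = q := by rw [hSdef, Finset.card_image_of_injOn hinj, hcard]
  have hSsub : S ⊆ range p := by
    intro x hx
    obtain ⟨i, _, rfl⟩ := Finset.mem_image.mp hx
    have := i.isLt
    exact mem_range.mpr (by omega)
  have hsum : ∑ i ∈ E, (p - (i : ℕ)) = ∑ x ∈ S, x + q := by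
    rw [hSdef, Finset.sum_image hinj]
    have : ∀ i ∈ E, p - (i : ℕ) = (p - 1 - (i : ℕ)) + 1 := by
      intro i _; have := i.isLt; omega
    rw [Finset.sum_congr rfl this, Finset.sum_add_distrib, Finset.sum_const, hcard, smul_eq_mul,
      mul_one]
  obtain ⟨hb1, hb2⟩ := subset_sum_bounds p q S hSsub hScard
  omega

/-- strictly decreasing integer chains bounded below -/
lemma chain_len_bound (m : ℤ) : ∀ (L : List ℤ) (x : ℤ), List.Chain' (· > ·) (x :: L) →
    (∀ y ∈ x :: L, m ≤ y) → (L.length : ℤ) ≤ x - m := by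
  intro L
  induction L with
  | nil => intro x _ hmem; simpa using hmem x (by simp)
  | cons y L' IH =>
    intro x hch hmem
    have hxy : x > y := (List.isChain_cons_cons.mp hch).1
    have hch' : List.Chain' (· > ·) (y :: L') := (List.isChain_cons_cons.mp hch).2
    have hmem' : ∀ z ∈ y :: L', m ≤ z := fun z hz => hmem z (List.mem_cons_of_mem _ hz)
    have := IH y hch' hmem'
    simp only [List.length_cons]
    push_cast
    omega


/-! ### The explicit chain -/

def e (q d t j : ℕ) : ℕ := j + min d (t - (q - 1 - j) * d)

lemma e_lt (p q t j : ℕ) (hqp : q < p) (hj : j < q) : e q (p - q) t j < p := by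
  unfold e
  have := Nat.min_le_left (p - q) (t - (q - 1 - j) * (p - q))
  omega

lemma e_strict_mono (q d t : ℕ) {j j' : ℕ} (h : j < j') : e q d t j < e q d t j' := by
  have h1 : (q - 1 - j') * d ≤ (q - 1 - j) * d := Nat.mul_le_mul_right d (by omega)
  have h2 : t - (q - 1 - j) * d ≤ t - (q - 1 - j') * d := Nat.sub_le_sub_left h1 t
  have h3 : min d (t - (q - 1 - j) * d) ≤ min d (t - (q - 1 - j') * d) :=
    min_le_min (le_refl d) h2
  unfold e
  omega

lemma e_inj (q d t : ℕ) : ∀ j, j < q → ∀ j', j' < q → e q d t j = e q d t j' → j = j' := by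
  intro j _ j' _ hee
  rcases lt_trichotomy j j' with h | h | h
  · exact absurd hee (Nat.ne_of_lt (e_strict_mono q d t h))
  · exact h
  · exact absurd hee.symm (Nat.ne_of_lt (e_strict_mono q d t h))

lemma e_mono_t (q d t j : ℕ) : e q d t j ≤ e q d (t + 1) j := by
  unfold e
  have h2 : t - (q - 1 - j) * d ≤ t + 1 - (q - 1 - j) * d :=
    Nat.sub_le_sub_right (Nat.le_succ t) _
  have h3 := min_le_min (le_refl d) h2
  omega

/-- The `t`-th configuration of the chain. -/
def cfg (p q k t : ℕ) : Fin p → ℕ :=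
  fun i => k + if ∃ j ∈ Finset.range q, e q (p - q) t j = (i : ℕ) then 1 else 0

lemma cfg_entries (p q k t : ℕ) (i : Fin p) : cfg p q k t i = k ∨ cfg p q k t i = k + 1 := by
  unfold cfg
  split
  · right; rfl
  · left; rfl

lemma cfg_card (p q k t : ℕ) (hqp : q < p) :
    (Finset.univ.filter (fun i : Fin p => ∃ j ∈ Finset.range q, e q (p - q) t j = (i : ℕ))).card
      = q := by
  have h := card_helper p q (e q (p - q) t) (fun j hj => e_lt p q t j hqp hj)
    (e_inj q (p - q) t) (fun _ => True)
  simpa using h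

lemma cfg_sum (p q k t : ℕ) (hqp : q < p) : ∑ i, cfg p q k t i = k * p + q := by
  have h := sum_config p k (cfg p q k t)
    (fun i : Fin p => ∃ j ∈ Finset.range q, e q (p - q) t j = (i : ℕ)) (fun i => rfl)
  rw [h, cfg_card p q k t hqp, Nat.mul_comm]

lemma cfg_filter_card (p q k t : ℕ) (hqp : q < p) (m : Fin p) :
    (Finset.univ.filter (fun i : Fin p =>
        i ≤ m ∧ ∃ j ∈ Finset.range q, e q (p - q) t j = (i : ℕ))).card
      = ((Finset.range q).filter (fun j => e q (p - q) t j ≤ (m : ℕ))).card := by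
  have heq : (Finset.univ.filter (fun i : Fin p =>
      i ≤ m ∧ ∃ j ∈ Finset.range q, e q (p - q) t j = (i : ℕ)))
      = Finset.univ.filter (fun i : Fin p =>
        (∃ j ∈ Finset.range q, e q (p - q) t j = (i : ℕ)) ∧ (i : ℕ) ≤ (m : ℕ)) := by
    ext i
    simp only [mem_filter, mem_univ, true_and, Fin.le_def, and_comm]
  rw [heq]
  exact card_helper p q (e q (p - q) t) (fun j hj => e_lt p q t j hqp hj)
    (e_inj q (p - q) t) (fun x => x ≤ (m : ℕ))

lemma cfg_dvec_nonneg (p q k t : ℕ) (hqp : q < p) (m : Fin p) :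
    0 ≤ dvec p (cfg p q k t) (cfg p q k (t + 1)) m := by
  rw [dvec_eq p k (cfg p q k t) (cfg p q k (t + 1))
    (fun i : Fin p => ∃ j ∈ Finset.range q, e q (p - q) t j = (i : ℕ))
    (fun i : Fin p => ∃ j ∈ Finset.range q, e q (p - q) (t + 1) j = (i : ℕ))
    (fun i => rfl) (fun i => rfl) m]
  rw [cfg_filter_card p q k t hqp m, cfg_filter_card p q k (t + 1) hqp m]
  have hsub : (Finset.range q).filter (fun j => e q (p - q) (t + 1) j ≤ (m : ℕ))
      ⊆ (Finset.range q).filter (fun j => e q (p - q) t j ≤ (m : ℕ)) := by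
    intro j hj
    obtain ⟨hj1, hj2⟩ := Finset.mem_filter.mp hj
    exact Finset.mem_filter.mpr ⟨hj1, le_trans (e_mono_t q (p - q) t j) hj2⟩
  have := Finset.card_le_card hsub
  have : ((Finset.range q).filter (fun j => e q (p - q) (t+1) j ≤ (m:ℕ))).card
      ≤ ((Finset.range q).filter (fun j => e q (p - q) t j ≤ (m:ℕ))).card :=
    Finset.card_le_card hsub
  omega

lemma cfg_ne (p q k t : ℕ) (hq : 0 < q) (hqp : q < p) (ht : t < q * (p - q)) :
    cfg p q k t ≠ cfg p q k (t + 1) := by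
  set d := p - q with hddef
  have hd : 0 < d := by omega
  obtain ⟨a, b, hb, hdm'⟩ : ∃ a b, b < d ∧ a * d + b = t :=
    ⟨t / d, t % d, Nat.mod_lt t hd, by rw [Nat.mul_comm]; exact Nat.div_add_mod t d⟩
  have ha : a < q := by
    by_contra hcon
    push_neg at hcon
    have := Nat.mul_le_mul_right d hcon
    omega
  set j0 := q - 1 - a with hj0def
  have hj0q : j0 < q := by omega
  set pos := j0 + b with hposdef
  have hsubt : t - a * d = b := by omega
  have hsubt1 : t + 1 - a * d = b + 1 := by omega
  have hqj0 : q - 1 - j0 = a := by omega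
  have h_e_t : e q d t j0 = pos := by
    unfold e
    rw [hqj0, hsubt, min_eq_right (le_of_lt hb)]
  have h_e_t1 : e q d (t + 1) j0 = pos + 1 := by
    unfold e
    rw [hqj0, hsubt1, min_eq_right hb]
    omega
  have h_other : ∀ j, j < q → j ≠ j0 → e q d (t + 1) j = e q d t j := by
    intro j hjq hne
    rcases Nat.lt_or_ge j j0 with hlt | hge
    · have h1 : a + 1 ≤ q - 1 - j := by omega
      have h2 : (a + 1) * d ≤ (q - 1 - j) * d := Nat.mul_le_mul_right d h1
      have h3 : (a + 1) * d = a * d + d := Nat.succ_mul a d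
      have hz : t - (q - 1 - j) * d = 0 := by omega
      have hz1 : t + 1 - (q - 1 - j) * d = 0 := by omega
      unfold e
      rw [hz, hz1]
    · have hgt : j0 < j := by omega
      have h1 : (q - 1 - j) + 1 ≤ a := by omega
      have h2 : ((q - 1 - j) + 1) * d ≤ a * d := Nat.mul_le_mul_right d h1
      have h3 : ((q - 1 - j) + 1) * d = (q - 1 - j) * d + d := Nat.succ_mul _ d
      have hz : d ≤ t - (q - 1 - j) * d := by omega
      have hz1 : d ≤ t + 1 - (q - 1 - j) * d := by omega
      unfold e
      rw [min_eq_left hz, min_eq_left hz1]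
  have hposlt : pos < p := by
    have := e_lt p q t j0 hqp hj0q
    rw [← hddef] at this
    omega
  intro heq
  have hcf := congrFun heq ⟨pos, hposlt⟩
  have h1 : cfg p q k t ⟨pos, hposlt⟩ = k + 1 := by
    unfold cfg
    rw [← hddef, if_pos ⟨j0, Finset.mem_range.mpr hj0q, h_e_t⟩]
  have h2 : cfg p q k (t + 1) ⟨pos, hposlt⟩ = k := by
    unfold cfg
    rw [← hddef]
    have hc : ¬ ∃ j ∈ Finset.range q, e q d (t + 1) j = ((⟨pos, hposlt⟩ : Fin p) : ℕ) := by
      rintro ⟨j, hj, hej⟩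
      have hej' : e q d (t + 1) j = pos := hej
      have hjq : j < q := Finset.mem_range.mp hj
      rcases eq_or_ne j j0 with rfl | hne
      · rw [h_e_t1] at hej'; omega
      · rw [h_other j hjq hne] at hej'
        have : e q d t j = e q d t j0 := by rw [hej', h_e_t]
        exact hne (e_inj q d t j hjq j0 hj0q this)
    rw [if_neg hc]
    rfl
  rw [h1, h2] at hcf
  omega

lemma chain_exists (p q k : ℕ) (hq : 0 < q) (hqp : q < p) :
    ∃ l : List (Fin p → ℕ),
      (∀ a ∈ l, (∀ i, a i = k ∨ a i = k + 1) ∧ ∑ i, a i = k * p + q) ∧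
      l.Chain' (fun x y => (∀ j, 0 ≤ dvec p x y j) ∧ x ≠ y) ∧
      l.length = q * (p - q) + 1 := by
  refine ⟨(List.range (q * (p - q) + 1)).map (cfg p q k), ?_, ?_, ?_⟩
  · intro a ha
    obtain ⟨t, _, rfl⟩ := List.mem_map.mp ha
    exact ⟨cfg_entries p q k t, cfg_sum p q k t hqp⟩
  · rw [List.Chain', List.isChain_map, List.isChain_range_succ]
    intro t ht
    exact ⟨cfg_dvec_nonneg p q k t hqp, cfg_ne p q k t hq hqp ht⟩
  · rw [List.length_map, List.length_range]

end Aux17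

open Finset Aux17 in
/-- On dual configurations with the dominance (prefix-sum) order, `P = (k+1,…,k+1,k,…,k)`
is the greatest element, and the longest chain has length `q(p−q)` (i.e. `q(p−q)+1`
elements). -/
theorem stmt17 (p k q : ℕ) [NeZero p] (hq : 0 < q) (hqp : q < p) :
    (∀ a : Fin p → ℕ, (∀ i, a i = k ∨ a i = k + 1) → (∑ i, a i = k * p + q) →
        ∀ j, 0 ≤ dvec p (fun i => if (i : ℕ) < q then k + 1 else k) a j) ∧
    (∃ l : List (Fin p → ℕ),
        (∀ a ∈ l, (∀ i, a i = k ∨ a i = k + 1) ∧ ∑ i, a i = k * p + q) ∧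
        l.Chain' (fun x y => (∀ j, 0 ≤ dvec p x y j) ∧ x ≠ y) ∧
        l.length = q * (p - q) + 1) ∧
    (∀ l : List (Fin p → ℕ),
        (∀ a ∈ l, (∀ i, a i = k ∨ a i = k + 1) ∧ ∑ i, a i = k * p + q) →
        l.Chain' (fun x y => (∀ j, 0 ≤ dvec p x y j) ∧ x ≠ y) →
        l.length ≤ q * (p - q) + 1) := by
  refine ⟨?_, chain_exists p q k hq hqp, ?_⟩
  · -- Part 1 : P is the greatest element
    intro a h1 h2 j
    have hP : ∀ i : Fin p, (if (i : ℕ) < q then k + 1 else k)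
        = k + if (i : ℕ) < q then 1 else 0 := by
      intro i; split <;> omega
    rw [dvec_eq p k _ a (fun i : Fin p => (i : ℕ) < q) (fun i => a i = k + 1) hP
      (indicator_form k a h1) j]
    have hEq := card_extra p k q a h1 h2
    rcases Nat.lt_or_ge (j : ℕ) q with hcase | hcase
    · have hc1 : (univ.filter (fun i : Fin p => i ≤ j ∧ (i : ℕ) < q))
          = univ.filter (fun i => i ≤ j) := by
        ext i
        simp only [mem_filter, mem_univ, true_and, Fin.le_def]
        exact ⟨And.left, fun h => ⟨h, by omega⟩⟩
      have hsub : (univ.filter (fun i : Fin p => i ≤ j ∧ a i = k + 1))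
          ⊆ univ.filter (fun i => i ≤ j) := by
        intro i hi
        exact mem_filter.mpr ⟨mem_univ _, (mem_filter.mp hi).2.1⟩
      have := Finset.card_le_card hsub
      rw [hc1]
      omega
    · have hc1 : (univ.filter (fun i : Fin p => i ≤ j ∧ (i : ℕ) < q))
          = Finset.Iio (⟨q, hqp⟩ : Fin p) := by
        ext i
        simp only [mem_filter, mem_univ, true_and, Fin.le_def, Finset.mem_Iio, Fin.lt_def]
        exact ⟨fun h => h.2, fun h => ⟨by omega, h⟩⟩
      have hsub : (univ.filter (fun i : Fin p => i ≤ j ∧ a i = k + 1))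
          ⊆ univ.filter (fun i => a i = k + 1) := by
        intro i hi
        exact mem_filter.mpr ⟨mem_univ _, (mem_filter.mp hi).2.2⟩
      have hle := Finset.card_le_card hsub
      rw [hc1, Fin.card_Iio]
      simp only [hEq] at hle ⊢
      omega
  · -- Part 3 : no chain is longer
    intro l hmem hchain
    cases l with
    | nil => simp
    | cons x L =>
      have key : List.Chain' (· > ·) (List.map (fun z => (phi p z : ℤ)) (x :: L)) := by
        rw [List.Chain', List.isChain_map]
        exact List.IsChain.imp (fun a b hab => phi_lt p a b hab.1 hab.2) hchain
      have hbounds : ∀ y ∈ x :: L,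
          k * (∑ i : Fin p, (p - (i : ℕ))) + (∑ z ∈ range q, z + q) ≤ phi p y ∧
          phi p y + ∑ z ∈ range (p - q), z
            ≤ k * (∑ i : Fin p, (p - (i : ℕ))) + (∑ z ∈ range p, z + q) := by
        intro y hy
        obtain ⟨h1, h2⟩ := hmem y hy
        have hsplit := phi_split p k y h1
        have hE := card_extra p k q y h1 h2
        obtain ⟨hb1, hb2⟩ := extras_sum_bounds p q (by omega) _ hE
        omega
      set m : ℤ := ((k * (∑ i : Fin p, (p - (i : ℕ))) + (∑ z ∈ range q, z + q) : ℕ) : ℤ)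
        with hmdef
      have hlow : ∀ y ∈ (phi p x : ℤ) :: List.map (fun z => (phi p z : ℤ)) L, m ≤ y := by
        intro y hy
        rw [hmdef]
        rcases List.mem_cons.mp hy with rfl | hy'
        · exact_mod_cast (hbounds x (by simp)).1
        · obtain ⟨z, hz, rfl⟩ := List.mem_map.mp hy'
          exact_mod_cast (hbounds z (List.mem_cons_of_mem _ hz)).1
      have hlen := chain_len_bound m (List.map (fun z => (phi p z : ℤ)) L) (phi p x)
        (by simpa using key) hlow
      rw [List.length_map] at hlen
      have hup := (hbounds x (by simp)).2
      have hid := range_sum_identity p q hqp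
      simp only [List.length_cons]
      have hcast : (L.length : ℤ) ≤ (q * (p - q) : ℕ) := by
        rw [hmdef] at hlen
        push_cast at hlen ⊢
        have hup' : (phi p x : ℤ) + (∑ z ∈ range (p - q), z : ℕ)
            ≤ (k * (∑ i : Fin p, (p - (i : ℕ))) : ℕ) + ((∑ z ∈ range p, z : ℕ) + q) := by
          exact_mod_cast hup
        have hid' : ((∑ z ∈ range p, z : ℕ) : ℤ)
            = ((∑ z ∈ range (p - q), z : ℕ) : ℤ) + ((q * (p - q) : ℕ) + (∑ z ∈ range q, z : ℕ)) := by
          exact_mod_cast hid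
        push_cast at hup' hid'
        omega
      have : L.length ≤ q * (p - q) := by exact_mod_cast hcast
      omega
end

section
/- If dual configuration a covers dual configuration b in the dominance order (prefix-sum order), then b is obtained from a by a single legal move. -/
def vv (p : ℕ) (a : Fin p → ℕ) (m : ℕ) : ℤ := if h : m < p then (a ⟨m, h⟩ : ℤ) else 0

lemma vv_lt (p : ℕ) (a : Fin p → ℕ) {m : ℕ} (h : m < p) : vv p a m = (a ⟨m, h⟩ : ℤ) := dif_pos h

lemma dvec_eq_range (p : ℕ) (a b : Fin p → ℕ) (j : Fin p) :
    dvec p a b j = ∑ m ∈ Finset.range (j.val + 1), (vv p a m - vv p b m) := by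
  have h1 : dvec p a b j = ∑ i : Fin p, (if i ≤ j then ((a i : ℤ) - b i) else 0) := by
    rw [dvec, Finset.sum_filter]
  set G : ℕ → ℤ := fun m => if h : m < p then
      (if (⟨m, h⟩ : Fin p) ≤ j then ((a ⟨m,h⟩ : ℤ) - b ⟨m,h⟩) else 0) else 0 with hG
  have h2 : ∑ i : Fin p, (if i ≤ j then ((a i : ℤ) - b i) else 0) = ∑ m ∈ Finset.range p, G m := by
    rw [← Fin.sum_univ_eq_sum_range G p]
    apply Finset.sum_congr rfl
    intro i _
    simp [hG, i.isLt]
  have h3 : ∑ m ∈ Finset.range p, G m = ∑ m ∈ Finset.range (j.val + 1), G m := by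
    refine (Finset.sum_subset ?_ ?_).symm
    · intro m hm
      simp only [Finset.mem_range] at hm ⊢
      have := j.isLt; omega
    · intro m hm hnm
      simp only [Finset.mem_range] at hm hnm
      have hle : ¬ ((⟨m, hm⟩ : Fin p) ≤ j) := by
        simp only [Fin.le_def]; omega
      simp [hG, hle]
  rw [h1, h2, h3]
  apply Finset.sum_congr rfl
  intro m hm
  simp only [Finset.mem_range] at hm
  have hmp : m < p := by have := j.isLt; omega
  have hmj : (⟨m, hmp⟩ : Fin p) ≤ j := by simp only [Fin.le_def]; omega
  simp [hG, hmj, vv, hmp]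

lemma sum_vv (p : ℕ) (a : Fin p → ℕ) :
    ∑ m ∈ Finset.range p, vv p a m = ∑ i : Fin p, (a i : ℤ) := by
  rw [← Fin.sum_univ_eq_sum_range (vv p a) p]
  apply Finset.sum_congr rfl
  intro i _
  simp [vv, i.isLt]


/-- If a dual configuration `a` covers a dual configuration `b` in the dominance order,
then `b` is obtained from `a` by a single legal move. -/
theorem stmt19 (p k q : ℕ) [NeZero p] (hq : 0 < q) (hqp : q < p)
    (a b : Fin p → ℕ)
    (ha : ∀ i, a i = k ∨ a i = k + 1) (ha' : ∑ i, a i = k * p + q)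
    (hb : ∀ i, b i = k ∨ b i = k + 1) (hb' : ∑ i, b i = k * p + q)
    (hab : ∀ j, 0 ≤ dvec p a b j) (hne : a ≠ b)
    (hcov : ∀ c : Fin p → ℕ, (∀ i, c i = k ∨ c i = k + 1) → (∑ i, c i = k * p + q) →
      (∀ j, 0 ≤ dvec p a c j) → (∀ j, 0 ≤ dvec p c b j) → c = a ∨ c = b) :
    Move p a b := by
  classical
  -- first index where a and b differ
  have hex : ∃ m, m < p ∧ vv p a m ≠ vv p b m := by
    by_contra h
    push_neg at h
    apply hne
    funext i
    have := h i.val i.isLt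
    rw [vv_lt p a i.isLt, vv_lt p b i.isLt] at this
    exact_mod_cast this
  set s := Nat.find hex with hs_def
  obtain ⟨hsp, hsne⟩ := Nat.find_spec hex
  have hs0 : ∀ m, m < s → vv p a m = vv p b m := by
    intro m hm
    by_contra h
    exact (Nat.find_min hex hm) ⟨by omega, h⟩
  -- prefix sum up to s equals the single difference at s
  have hpref : ∀ u, u ≤ s → ∑ m ∈ Finset.range u, (vv p a m - vv p b m) = 0 := by
    intro u hu
    apply Finset.sum_eq_zero
    intro m hm
    simp only [Finset.mem_range] at hm
    rw [hs0 m (by omega)]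
    ring
  have hDs : ∑ m ∈ Finset.range (s + 1), (vv p a m - vv p b m) = vv p a s - vv p b s := by
    rw [Finset.sum_range_succ, hpref s le_rfl, zero_add]
  have h1 : (1 : ℤ) ≤ vv p a s - vv p b s := by
    have h0 := hab ⟨s, hsp⟩
    rw [dvec_eq_range] at h0
    simp only at h0
    rw [hDs] at h0
    rcases ha ⟨s, hsp⟩ with h2 | h2 <;> rcases hb ⟨s, hsp⟩ with h3 | h3 <;>
      rw [vv_lt p a hsp, vv_lt p b hsp, h2, h3] at h0 hsne ⊢ <;> push_cast at h0 hsne ⊢ <;> omega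
  have has : a ⟨s, hsp⟩ = k + 1 := by
    rw [vv_lt p a hsp, vv_lt p b hsp] at h1
    rcases ha ⟨s, hsp⟩ with h2 | h2
    · rcases hb ⟨s, hsp⟩ with h3 | h3 <;> rw [h2, h3] at h1 <;> push_cast at h1 <;> omega
    · exact h2
  have hbs : b ⟨s, hsp⟩ = k := by
    rw [vv_lt p a hsp, vv_lt p b hsp, has] at h1
    rcases hb ⟨s, hsp⟩ with h3 | h3
    · exact h3
    · rw [h3] at h1; push_cast at h1; omega
  -- total sum difference is zero
  have hsum0 : ∑ m ∈ Finset.range p, (vv p a m - vv p b m) = 0 := by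
    rw [Finset.sum_sub_distrib, sum_vv, sum_vv]
    have hA : ((∑ i, a i : ℕ) : ℤ) = ∑ i : Fin p, (a i : ℤ) := by push_cast; rfl
    have hB : ((∑ i, b i : ℕ) : ℤ) = ∑ i : Fin p, (b i : ℤ) := by push_cast; rfl
    rw [← hA, ← hB, ha', hb']
    ring
  -- existence of first descent after s
  have hext : ∃ t, s < t ∧ t < p ∧ vv p a t = (k : ℤ) := by
    by_contra h
    push_neg at h
    have hbig : ∀ m, s < m → m < p → vv p a m = (k : ℤ) + 1 := by
      intro m h1' h2'
      rcases ha ⟨m, h2'⟩ with h' | h'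
      · exact absurd (by rw [vv_lt p a h2', h']) (h m h1' h2')
      · rw [vv_lt p a h2', h']; push_cast; ring
    have hsplit : ∑ m ∈ Finset.range (s+1), (vv p a m - vv p b m)
        + ∑ m ∈ Finset.Ico (s+1) p, (vv p a m - vv p b m)
        = ∑ m ∈ Finset.range p, (vv p a m - vv p b m) := by
      simp only [Finset.range_eq_Ico]
      exact Finset.sum_Ico_consecutive (fun m => vv p a m - vv p b m) (m := 0) (n := s+1) (k := p) (by omega) (by omega)
    have hnn : 0 ≤ ∑ m ∈ Finset.Ico (s+1) p, (vv p a m - vv p b m) := by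
      apply Finset.sum_nonneg
      intro m hm
      simp only [Finset.mem_Ico] at hm
      have hmp : m < p := hm.2
      rw [hbig m (by omega) hmp]
      rcases hb ⟨m, hmp⟩ with h' | h' <;> rw [vv_lt p b hmp, h'] <;> push_cast <;> omega
    rw [hDs] at hsplit
    omega
  set t := Nat.find hext with ht_def
  obtain ⟨hst, htp, hat⟩ := Nat.find_spec hext
  have hmin : ∀ m, s < m → m < t → vv p a m = (k : ℤ) + 1 := by
    intro m h1' h2'
    have hmp : m < p := by omega
    have := Nat.find_min hext h2'
    rcases ha ⟨m, hmp⟩ with h' | h'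
    · exact absurd ⟨h1', hmp, by rw [vv_lt p a hmp, h']⟩ this
    · rw [vv_lt p a hmp, h']; push_cast; ring
  have hp2 : 2 ≤ p := by omega
  set t1 := t - 1 with ht1_def
  have ht1p : t1 < p := by omega
  have ht1t : t1 + 1 = t := by omega
  set i : Fin p := ⟨t1, ht1p⟩ with hi_def
  have h1p : ((1 : Fin p) : ℕ) = 1 := by rw [Fin.val_one']; exact Nat.mod_eq_of_lt hp2
  have hi1 : (i + 1 : Fin p) = ⟨t, htp⟩ := by
    apply Fin.ext
    rw [Fin.add_def, h1p]
    show (t1 + 1) % p = t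
    rw [ht1t]; exact Nat.mod_eq_of_lt htp
  have hne_i : i ≠ i + 1 := by
    rw [hi1]
    intro h
    have : t1 = t := congrArg Fin.val h
    omega
  have hat1 : a i = k + 1 := by
    by_cases h : t1 = s
    · have : i = ⟨s, hsp⟩ := by apply Fin.ext; simp [hi_def, h]
      rw [this, has]
    · have h' := hmin t1 (by omega) (by omega)
      rw [vv_lt p a ht1p] at h'
      exact_mod_cast h'
  have hatt : a ⟨t, htp⟩ = k := by
    rw [vv_lt p a htp] at hat
    exact_mod_cast hat
  have hleg : legal p a i := by
    rw [legal, hi1, hatt, hat1]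
    omega
  set c := step p a i with hc_def
  have hci : c i = k := by
    rw [hc_def, step, Function.update_of_ne hne_i, Function.update_self, hat1]
    omega
  have hci1 : c (i + 1) = k + 1 := by
    rw [hc_def, step, Function.update_self, hi1, hatt]
  have hcm : ∀ m : Fin p, m ≠ i → m ≠ i + 1 → c m = a m := by
    intro m hm1 hm2
    rw [hc_def, step, Function.update_of_ne hm2, Function.update_of_ne hm1]
  -- values of c in ℕ-indexed form
  have hvc : ∀ m, m < p → vv p a m - vv p c m
      = (if m = t1 then 1 else 0) + (if m = t then -1 else 0) := by
    intro m hmp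
    rw [vv_lt p a hmp, vv_lt p c hmp]
    by_cases h1' : m = t1
    · have he : (⟨m, hmp⟩ : Fin p) = i := by apply Fin.ext; exact h1'
      rw [he, hci, hat1]
      have hmt : m ≠ t := by omega
      rw [if_pos h1', if_neg hmt]
      push_cast; ring
    · by_cases h2' : m = t
      · have he : (⟨m, hmp⟩ : Fin p) = i + 1 := by rw [hi1]; apply Fin.ext; exact h2'
        rw [he, hci1, hi1, hatt]
        rw [if_neg h1', if_pos h2']
        push_cast; ring
      · have hne1 : (⟨m, hmp⟩ : Fin p) ≠ i := by
          intro h; apply h1'; exact congrArg Fin.val h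
        have hne2 : (⟨m, hmp⟩ : Fin p) ≠ i + 1 := by
          rw [hi1]; intro h; apply h2'; exact congrArg Fin.val h
        rw [hcm _ hne1 hne2]
        simp [h1', h2']
  have hdac : ∀ j : Fin p, dvec p a c j
      = (if t1 ∈ Finset.range (j.val + 1) then (1:ℤ) else 0)
      + (if t ∈ Finset.range (j.val + 1) then (-1:ℤ) else 0) := by
    intro j
    rw [dvec_eq_range]
    rw [Finset.sum_congr rfl (fun m hm => by
      have hmp : m < p := by have := j.isLt; simp only [Finset.mem_range] at hm; omega
      exact hvc m hmp)]
    rw [Finset.sum_add_distrib, Finset.sum_ite_eq' (Finset.range (j.val+1)) t1 (fun _ => (1:ℤ)),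
      Finset.sum_ite_eq' (Finset.range (j.val+1)) t (fun _ => (-1:ℤ))]
  -- prefix sums of a - b up to t1 are at least 1
  have hDt1 : (1 : ℤ) ≤ ∑ m ∈ Finset.range (t1 + 1), (vv p a m - vv p b m) := by
    have hsplit : ∑ m ∈ Finset.range (s+1), (vv p a m - vv p b m)
        + ∑ m ∈ Finset.Ico (s+1) (t1+1), (vv p a m - vv p b m)
        = ∑ m ∈ Finset.range (t1+1), (vv p a m - vv p b m) := by
      simp only [Finset.range_eq_Ico]
      exact Finset.sum_Ico_consecutive (fun m => vv p a m - vv p b m) (m := 0) (n := s+1) (k := t1+1) (by omega) (by omega)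
    have hnn : 0 ≤ ∑ m ∈ Finset.Ico (s+1) (t1+1), (vv p a m - vv p b m) := by
      apply Finset.sum_nonneg
      intro m hm
      simp only [Finset.mem_Ico] at hm
      have hmp : m < p := by omega
      rw [hmin m (by omega) (by omega)]
      rcases hb ⟨m, hmp⟩ with h' | h' <;> rw [vv_lt p b hmp, h'] <;> push_cast <;> omega
    rw [hDs] at hsplit
    omega
  -- the four hypotheses of hcov
  have hc1 : ∀ m, c m = k ∨ c m = k + 1 := by
    intro m
    by_cases h1' : m = i
    · left; rw [h1', hci]
    · by_cases h2' : m = i + 1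
      · right; rw [h2', hci1]
      · rw [hcm m h1' h2']; exact ha m
  have hc2 : ∑ m, c m = k * p + q := by
    have hz : ∑ m : Fin p, ((c m : ℤ) - (a m : ℤ)) = 0 := by
      rw [← Finset.sum_subset (Finset.subset_univ ({i, i+1} : Finset (Fin p)))
        (fun m _ hm => by
          simp only [Finset.mem_insert, Finset.mem_singleton, not_or] at hm
          rw [hcm m hm.1 hm.2]; ring)]
      rw [Finset.sum_pair hne_i, hci, hci1, hat1, hi1, hatt]
      push_cast; ring
    rw [Finset.sum_sub_distrib] at hz
    have h2' : ∑ m : Fin p, (c m : ℤ) = ∑ m : Fin p, (a m : ℤ) := by linarith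
    have hfin : ((∑ m, c m : ℕ) : ℤ) = ((∑ m, a m : ℕ) : ℤ) := by
      push_cast
      exact h2'
    have h3' : ∑ m, c m = ∑ m, a m := Nat.cast_inj.mp hfin
    rw [h3', ha']
  have hc3 : ∀ j, 0 ≤ dvec p a c j := by
    intro j
    rw [hdac j]
    have himp : t ∈ Finset.range (j.val + 1) → t1 ∈ Finset.range (j.val + 1) := by
      intro h; simp only [Finset.mem_range] at h ⊢; omega
    split_ifs with hA hB hB
    · omega
    · omega
    · exact absurd (himp hB) hA
    · omega
  have hc4 : ∀ j, 0 ≤ dvec p c b j := by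
    intro j
    have key : dvec p c b j = dvec p a b j - dvec p a c j := by
      rw [dvec_eq_range, dvec_eq_range, dvec_eq_range, ← Finset.sum_sub_distrib]
      apply Finset.sum_congr rfl
      intro m _
      ring
    rw [key, hdac j]
    by_cases h1' : t ∈ Finset.range (j.val + 1)
    · have h2' : t1 ∈ Finset.range (j.val + 1) := by
        simp only [Finset.mem_range] at h1' ⊢; omega
      simp only [h1', h2', if_true]
      have := hab j
      omega
    · by_cases h2' : t1 ∈ Finset.range (j.val + 1)
      · -- then j.val = t1, and dvec a b j ≥ 1
        have hj : j.val = t1 := by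
          simp only [Finset.mem_range] at h1' h2'; omega
        have : (1:ℤ) ≤ dvec p a b j := by
          rw [dvec_eq_range, hj]
          exact hDt1
        simp only [h1', h2', if_true, if_false]
        omega
      · simp only [h1', h2', if_false]
        have := hab j
        omega
  rcases hcov c hc1 hc2 hc3 hc4 with h | h
  · exfalso
    have := congrFun h i
    rw [hci, hat1] at this
    omega
  · exact ⟨i, hleg, h.symm⟩
end
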